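/- Let V : ℝ → ℝ be continuous and 1-periodic, and let h > 0 be irrational. Then the spectrum of P_d(h,θ) does not depend on θ: for all θ, θ' ∈ ℝ, Spec(P_d(h,θ)) = Spec(P_d(h,θ')). Consequently Σ_h = Spec(P_d(h,θ)) for every θ ∈ ℝ. -/

import Mathlib

open MeasureTheory Set

/-- `T` is the bounded self-adjoint operator `P_d(h,θ)` on `ℓ²(ℤ)` given by
`(T v)(γ) = 2v(γ) - v(γ+1) - v(γ-1) + V(hγ + θ)v(γ)`. -/
def IsDiscreteSchrodinger1D (V : ℝ → ℝ) (h θ : ℝ)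
    (T : lp (fun _ : ℤ => ℂ) 2 →L[ℂ] lp (fun _ : ℤ => ℂ) 2) : Prop :=
  ∀ (v : lp (fun _ : ℤ => ℂ) 2) (γ : ℤ),
    T v γ = 2 * v γ - v (γ + 1) - v (γ - 1) + (V (h * (γ : ℝ) + θ) : ℂ) * v γ

open ENNReal

noncomputable section

local notation "E2" => lp (fun _ : ℤ => ℂ) 2

lemma memℓp_comp_equiv (e : ℤ ≃ ℤ) (v : E2) : Memℓp (fun γ => v (e γ)) 2 := by
  have hs := (lp.memℓp v).summable (by norm_num : 0 < (2:ℝ≥0∞).toReal)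
  exact memℓp_gen ((e.summable_iff (f := fun γ => ‖v γ‖ ^ (2:ℝ≥0∞).toReal)).2 hs)

/-- composition with an equivalence of `ℤ` as a linear isometry equivalence of `ℓ²`. -/
def compEquivLi (e : ℤ ≃ ℤ) : E2 ≃ₗᵢ[ℂ] E2 where
  toLinearEquiv :=
    { toFun := fun v => ⟨fun γ => v (e γ), memℓp_comp_equiv e v⟩
      invFun := fun v => ⟨fun γ => v (e.symm γ), memℓp_comp_equiv e.symm v⟩
      map_add' := by
        intro v w; apply lp.ext; funext γ
        simp [lp.coeFn_add]; rfl
      map_smul' := by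
        intro c v; apply lp.ext; funext γ
        simp [lp.coeFn_smul]
      left_inv := by intro v; apply lp.ext; funext γ; simp
      right_inv := by intro v; apply lp.ext; funext γ; simp }
  norm_map' := by
    intro v
    have h2 : 0 < (2:ℝ≥0∞).toReal := by norm_num
    rw [lp.norm_eq_tsum_rpow h2, lp.norm_eq_tsum_rpow h2]
    congr 1
    exact e.tsum_eq (f := fun γ => ‖v γ‖ ^ (2:ℝ≥0∞).toReal)

@[simp] lemma compEquivLi_apply (e : ℤ ≃ ℤ) (v : E2) (γ : ℤ) :
    compEquivLi e v γ = v (e γ) := rfl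

@[simp] lemma compEquivLi_symm_apply (e : ℤ ≃ ℤ) (v : E2) (γ : ℤ) :
    (compEquivLi e).symm v γ = v (e.symm γ) := rfl

/-- a diagonally-acting operator with bounded coefficients has norm at most the bound. -/
lemma diag_norm_le (A : E2 →L[ℂ] E2) (c : ℤ → ℂ) (C : ℝ) (hC : 0 ≤ C)
    (hc : ∀ γ, ‖c γ‖ ≤ C) (hA : ∀ (v : E2) (γ : ℤ), A v γ = c γ * v γ) : ‖A‖ ≤ C := by
  refine A.opNorm_le_bound hC fun v => ?_
  have h2 : 0 < (2:ℝ≥0∞).toReal := by norm_num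
  refine lp.norm_le_of_forall_sum_le h2 (by positivity) fun s => ?_
  have key : ∀ γ, ‖A v γ‖ ^ (2:ℝ≥0∞).toReal ≤ C ^ (2:ℝ≥0∞).toReal * ‖v γ‖ ^ (2:ℝ≥0∞).toReal := by
    intro γ
    rw [hA, norm_mul, Real.mul_rpow (norm_nonneg _) (norm_nonneg _)]
    exact mul_le_mul_of_nonneg_right
      (Real.rpow_le_rpow (norm_nonneg _) (hc γ) ENNReal.toReal_nonneg)
      (Real.rpow_nonneg (norm_nonneg _) _)
  calc ∑ γ ∈ s, ‖A v γ‖ ^ (2:ℝ≥0∞).toReal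
      ≤ ∑ γ ∈ s, C ^ (2:ℝ≥0∞).toReal * ‖v γ‖ ^ (2:ℝ≥0∞).toReal :=
        Finset.sum_le_sum fun γ _ => key γ
    _ = C ^ (2:ℝ≥0∞).toReal * ∑ γ ∈ s, ‖v γ‖ ^ (2:ℝ≥0∞).toReal := by rw [Finset.mul_sum]
    _ ≤ C ^ (2:ℝ≥0∞).toReal * ‖v‖ ^ (2:ℝ≥0∞).toReal := by
        have := lp.sum_rpow_le_norm_rpow h2 v s
        have hCp : (0:ℝ) ≤ C ^ (2:ℝ≥0∞).toReal := Real.rpow_nonneg hC _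
        nlinarith [this, hCp]
    _ = (C * ‖v‖) ^ (2:ℝ≥0∞).toReal := (Real.mul_rpow hC (norm_nonneg _)).symm


lemma isSelfAdjoint_diag (A : E2 →L[ℂ] E2) (c : ℤ → ℝ)
    (hA : ∀ (v : E2) (γ : ℤ), A v γ = (c γ : ℂ) * v γ) : IsSelfAdjoint A := by
  rw [ContinuousLinearMap.isSelfAdjoint_iff_isSymmetric]
  intro v w
  simp only [ContinuousLinearMap.coe_coe]
  rw [lp.inner_eq_tsum, lp.inner_eq_tsum]
  refine tsum_congr fun γ => ?_
  rw [RCLike.inner_apply, RCLike.inner_apply, hA, hA]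
  simp only [map_mul, Complex.conj_ofReal]
  ring

lemma T_selfadjoint (V : ℝ → ℝ) (h θ : ℝ) (A : E2 →L[ℂ] E2)
    (hA : IsDiscreteSchrodinger1D V h θ A) : IsSelfAdjoint A := by
  set e : ℤ ≃ ℤ := Equiv.addRight (1:ℤ) with he
  set U : E2 →L[ℂ] E2 := (compEquivLi e : E2 →L[ℂ] E2) with hU
  set B : E2 →L[ℂ] E2 := (2:ℂ) • (1 : E2 →L[ℂ] E2) - (U + star U) with hB
  have hBsa : IsSelfAdjoint B := by
    refine IsSelfAdjoint.sub (IsSelfAdjoint.smul (by simp) ?_) (IsSelfAdjoint.add_star_self U)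
    exact IsSelfAdjoint.one _
  have hstarU : ∀ (v : E2) (γ : ℤ), (star U) v γ = v (γ - 1) := by
    intro v γ
    rw [ContinuousLinearMap.star_eq_adjoint, hU, LinearIsometryEquiv.adjoint_eq_symm]
    simp [he, sub_eq_add_neg]
  have hBv : ∀ (v : E2) (γ : ℤ), B v γ = 2 * v γ - v (γ + 1) - v (γ - 1) := by
    intro v γ
    have : B v = (2:ℂ) • v - (U v + (star U) v) := by
      simp [hB, ContinuousLinearMap.sub_apply, ContinuousLinearMap.add_apply]
    rw [this]
    have : ((2:ℂ) • v - (U v + (star U) v) : E2) γ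
        = (2:ℂ) • (v γ) - (U v γ + (star U) v γ) := by
      rw [lp.coeFn_sub, lp.coeFn_add, lp.coeFn_smul]; rfl
    rw [this, hstarU]
    simp [hU, he]
    ring
  have key : A = B + (A - B) := by abel
  rw [key]
  refine hBsa.add (isSelfAdjoint_diag _ (fun γ => V (h * γ + θ)) ?_)
  intro v γ
  have : (A - B) v γ = A v γ - B v γ := by
    rw [ContinuousLinearMap.sub_apply, lp.coeFn_sub]; rfl
  rw [this, hA v γ, hBv v γ]; ring

lemma T_conj (V : ℝ → ℝ) (h θ : ℝ) (A A' : E2 →L[ℂ] E2)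
    (hA : IsDiscreteSchrodinger1D V h θ A)
    (hA' : IsDiscreteSchrodinger1D V h (θ + h) A') :
    spectrum ℂ A' = spectrum ℂ A := by
  set e : ℤ ≃ ℤ := Equiv.addRight (1:ℤ) with he
  set Uc : E2 →L[ℂ] E2 := (compEquivLi e : E2 →L[ℂ] E2) with hUc
  set Uc' : E2 →L[ℂ] E2 := ((compEquivLi e).symm : E2 →L[ℂ] E2) with hUc'
  have hu1 : Uc * Uc' = 1 := by
    ext v
    simp [hUc, hUc', ContinuousLinearMap.mul_apply]
  have hu2 : Uc' * Uc = 1 := by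
    ext v
    simp [hUc, hUc', ContinuousLinearMap.mul_apply]
  set u : (E2 →L[ℂ] E2)ˣ := ⟨Uc, Uc', hu1, hu2⟩ with hu
  have key : A' = ↑u * A * ↑u⁻¹ := by
    refine ContinuousLinearMap.ext fun v => lp.ext (funext fun γ => ?_)
    have hL := hA' v γ
    have hR := hA (Uc' v) (γ + 1)
    have happ : (↑u * A * ↑u⁻¹ : E2 →L[ℂ] E2) v γ = (A (Uc' v)) (γ + 1) := by
      simp [hu, ContinuousLinearMap.mul_apply, hUc, he]
    rw [happ, hR, hL]
    have h1 : (Uc' v) (γ + 1) = v γ := by simp [hUc', he]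
    have h2 : (Uc' v) (γ + 1 + 1) = v (γ + 1) := by simp [hUc', he]
    have h3 : (Uc' v) (γ + 1 - 1) = v (γ - 1) := by simp [hUc', he, sub_eq_add_neg]
    rw [h1, h2, h3]
    have harg : h * ((γ:ℤ) + 1 : ℤ) + θ = h * (γ:ℝ) + (θ + h) := by push_cast; ring
    rw [harg]
  rw [key]
  exact spectrum.units_conjugate

lemma T_period (V : ℝ → ℝ) (hper : ∀ x, V (x + 1) = V x) (h θ : ℝ) (A A' : E2 →L[ℂ] E2)
    (hA : IsDiscreteSchrodinger1D V h θ A)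
    (hA' : IsDiscreteSchrodinger1D V h (θ + 1) A') : A' = A := by
  refine ContinuousLinearMap.ext fun v => lp.ext (funext fun γ => ?_)
  rw [hA v γ, hA' v γ]
  have : h * (γ:ℝ) + (θ + 1) = (h * γ + θ) + 1 := by ring
  rw [this, hper]

lemma T_diff_norm (V : ℝ → ℝ) (h θ₁ θ₂ : ℝ) (A₁ A₂ : E2 →L[ℂ] E2)
    (hA₁ : IsDiscreteSchrodinger1D V h θ₁ A₁) (hA₂ : IsDiscreteSchrodinger1D V h θ₂ A₂)
    (C : ℝ) (hC : 0 ≤ C) (hVc : ∀ x : ℝ, |V (x + θ₁) - V (x + θ₂)| ≤ C) :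
    ‖A₁ - A₂‖ ≤ C := by
  refine diag_norm_le _ (fun γ => ((V (h*γ+θ₁) - V (h*γ+θ₂) : ℝ) : ℂ)) C hC ?_ ?_
  · intro γ
    rw [Complex.norm_real, Real.norm_eq_abs]
    exact hVc (h * γ)
  · intro v γ
    have : (A₁ - A₂) v γ = A₁ v γ - A₂ v γ := by
      rw [ContinuousLinearMap.sub_apply, lp.coeFn_sub]; rfl
    rw [this, hA₁ v γ, hA₂ v γ]; push_cast; ring


lemma spectrum_stable (a b : E2 →L[ℂ] E2) (ha : IsSelfAdjoint a) {z : ℂ}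
    (hz : z ∈ spectrum ℂ b) (hd : ‖b - a‖ < Metric.infDist z (spectrum ℂ a)) : False := by
  set D := Metric.infDist z (spectrum ℂ a) with hD
  have hD0 : 0 < D := lt_of_le_of_lt (norm_nonneg _) hd
  have hdist : ∀ x ∈ spectrum ℂ a, D ≤ ‖z - x‖ := fun x hx => by
    simpa [dist_eq_norm] using Metric.infDist_le_dist_of_mem hx
  haveI : IsStarNormal a := ha.isStarNormal
  have hne : ∀ x ∈ spectrum ℂ a, z - x ≠ 0 := by
    intro x hx h0
    have := hdist x hx
    rw [h0, norm_zero] at this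
    linarith
  have hcont : ContinuousOn (fun x : ℂ => (z - x)⁻¹) (spectrum ℂ a) :=
    ContinuousOn.inv₀ (continuous_const.sub continuous_id).continuousOn hne
  have hcont2 : ContinuousOn (fun x : ℂ => z - x) (spectrum ℂ a) :=
    (continuous_const.sub continuous_id).continuousOn
  set za := algebraMap ℂ (E2 →L[ℂ] E2) z with hza
  set r := cfc (fun x : ℂ => (z - x)⁻¹) a with hr
  have hfa : za - a = cfc (fun x : ℂ => z - x) a := by
    rw [cfc_sub (fun _ => z) (fun x => x) a (by fun_prop) (by fun_prop), cfc_const z a,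
      cfc_id' ℂ a]
  have hmul : r * (za - a) = 1 := by
    rw [hfa, hr, ← cfc_mul _ _ a hcont hcont2]
    have : (spectrum ℂ a).EqOn (fun x => (z - x)⁻¹ * (z - x)) (fun _ => (1:ℂ)) := by
      intro x hx
      exact inv_mul_cancel₀ (hne x hx)
    rw [cfc_congr this, cfc_const _ a, map_one]
  have hmul' : (za - a) * r = 1 := by
    rw [hfa, hr, ← cfc_mul _ _ a hcont2 hcont]
    have : (spectrum ℂ a).EqOn (fun x => (z - x) * (z - x)⁻¹) (fun _ => (1:ℂ)) := by
      intro x hx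
      exact mul_inv_cancel₀ (hne x hx)
    rw [cfc_congr this, cfc_const _ a, map_one]
  have hnorm : ‖r‖ ≤ D⁻¹ := by
    refine norm_cfc_le (by positivity) fun x hx => ?_
    rw [norm_inv]
    exact inv_anti₀ hD0 (hdist x hx)
  have hsmall : ‖r * (b - a)‖ < 1 :=
    calc ‖r * (b - a)‖ ≤ ‖r‖ * ‖b - a‖ := norm_mul_le _ _
      _ ≤ D⁻¹ * ‖b - a‖ := mul_le_mul_of_nonneg_right hnorm (norm_nonneg _)
      _ < D⁻¹ * D := by
          exact mul_lt_mul_of_pos_left hd (inv_pos.2 hD0)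
      _ = 1 := inv_mul_cancel₀ hD0.ne'
  have hu2 : IsUnit (1 - r * (b - a)) := (Units.oneSub _ hsmall).isUnit
  have hu1 : IsUnit (za - a) := ⟨⟨za - a, r, hmul', hmul⟩, rfl⟩
  have hfac : za - b = (za - a) * (1 - r * (b - a)) := by
    calc za - b = (za - a) - (b - a) := by abel
      _ = (za - a) - ((za - a) * r) * (b - a) := by rw [hmul', one_mul]
      _ = (za - a) * (1 - r * (b - a)) := by noncomm_ring
  have : IsUnit (za - b) := hfac ▸ hu1.mul hu2
  exact spectrum.notMem_iff.mpr this hz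

lemma V_unif (V : ℝ → ℝ) (hV : Continuous V) (hper : ∀ x, V (x + 1) = V x) :
    ∀ ε > 0, ∃ δ > 0, ∀ x y : ℝ, |x - y| < δ → |V x - V y| ≤ ε := by
  intro ε hε
  have hp : Function.Periodic V 1 := hper
  have hu := (isCompact_Icc (a := (-1:ℝ)) (b := 2)).uniformContinuousOn_of_continuous
    hV.continuousOn
  rw [Metric.uniformContinuousOn_iff] at hu
  obtain ⟨δ, hδ, hδ'⟩ := hu ε hε
  refine ⟨min δ 1, lt_min hδ one_pos, fun x y hxy => ?_⟩
  have hxy1 : |x - y| < 1 := lt_of_lt_of_le hxy (min_le_right _ _)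
  have hxyδ : |x - y| < δ := lt_of_lt_of_le hxy (min_le_left _ _)
  set n : ℤ := ⌊x⌋ with hn
  have hx0 : (0:ℝ) ≤ x - n := sub_nonneg.2 (Int.floor_le x)
  have hx1 : x - n < 1 := by
    have := Int.lt_floor_add_one x
    linarith
  obtain ⟨hab1, hab2⟩ := abs_lt.mp hxy1
  have hmemx : x - (n:ℝ) ∈ Icc (-1:ℝ) 2 := ⟨by linarith, by linarith⟩
  have hmemy : y - (n:ℝ) ∈ Icc (-1:ℝ) 2 := ⟨by linarith, by linarith⟩
  have hdxy : dist (x - (n:ℝ)) (y - (n:ℝ)) < δ := by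
    rw [Real.dist_eq]
    have : x - (n:ℝ) - (y - n) = x - y := by ring
    rw [this]
    exact hxyδ
  have := hδ' _ hmemx _ hmemy hdxy
  rw [Real.dist_eq] at this
  have ex : V (x - (n:ℝ)) = V x := by
    have := hp.sub_int_mul_eq (x := x) n
    rwa [mul_one] at this
  have ey : V (y - (n:ℝ)) = V y := by
    have := hp.sub_int_mul_eq (x := y) n
    rwa [mul_one] at this
  rw [ex, ey] at this
  exact this.le


lemma dense_sub (h : ℝ) (hirr : Irrational h) :
    Dense ((AddSubgroup.closure {1, h} : AddSubgroup ℝ) : Set ℝ) := by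
  rcases (AddSubgroup.closure ({1, h} : Set ℝ)).dense_or_cyclic with hd | ⟨a, ha⟩
  · exact hd
  · exfalso
    have h1 : (1:ℝ) ∈ AddSubgroup.closure ({1, h} : Set ℝ) :=
      AddSubgroup.subset_closure (by simp)
    have h2 : h ∈ AddSubgroup.closure ({1, h} : Set ℝ) :=
      AddSubgroup.subset_closure (by simp)
    rw [ha, AddSubgroup.mem_closure_singleton] at h1 h2
    obtain ⟨n, hn⟩ := h1
    obtain ⟨m, hm⟩ := h2
    rw [zsmul_eq_mul] at hn hm
    have hn0 : (n:ℝ) ≠ 0 := by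
      intro h0
      rw [h0, zero_mul] at hn
      norm_num at hn
    refine hirr ⟨(m : ℚ) / (n : ℚ), ?_⟩
    have hA : a = 1 / (n:ℝ) := by field_simp; linarith
    rw [← hm, hA]
    push_cast
    field_simp

/-- **Lemma 4.1 (Herman–Sjöstrand, [HS88, (1.2)]).** For irrational `h` the spectrum of
`P_d(h,θ)` does not depend on `θ`, and hence `Σ_h = ∪_θ Spec(P_d(h,θ)) = Spec(P_d(h,θ))` for
every `θ`. -/
theorem spectrum_independent_of_theta_irrational
    (V : ℝ → ℝ) (hV : Continuous V) (hper : ∀ x, V (x + 1) = V x)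
    (h : ℝ) (hh : 0 < h) (hirr : Irrational h)
    (T : ℝ → (lp (fun _ : ℤ => ℂ) 2 →L[ℂ] lp (fun _ : ℤ => ℂ) 2))
    (hT : ∀ θ, IsDiscreteSchrodinger1D V h θ (T θ)) :
    (∀ θ θ' : ℝ, spectrum ℂ (T θ) = spectrum ℂ (T θ')) ∧
      ∀ θ : ℝ, (⋃ θ' : ℝ, spectrum ℂ (T θ')) = spectrum ℂ (T θ) := by
  classical
  -- nontriviality
  have hsingle : (lp.single 2 (0:ℤ) (1:ℂ) : E2) ≠ 0 := by
    intro h0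
    have h1 : (lp.single 2 (0:ℤ) (1:ℂ) : E2) (0:ℤ) = 1 := lp.single_apply_self 2 0 1
    rw [h0] at h1
    have h2 : ((0 : E2) : ∀ _ : ℤ, ℂ) 0 = 0 := by rw [lp.coeFn_zero]; rfl
    rw [h2] at h1
    exact one_ne_zero h1.symm
  haveI : Nontrivial E2 := ⟨_, 0, hsingle⟩
  haveI : Nontrivial (E2 →L[ℂ] E2) := by
    refine ⟨1, 0, fun hc => hsingle ?_⟩
    have := DFunLike.congr_fun hc (lp.single 2 (0:ℤ) (1:ℂ))
    simpa using this
  -- invariance along the subgroup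
  have hsub : ∀ s ∈ AddSubgroup.closure ({1, h} : Set ℝ),
      ∀ ψ : ℝ, spectrum ℂ (T (ψ + s)) = spectrum ℂ (T ψ) := by
    intro s hs
    induction hs using AddSubgroup.closure_induction with
    | mem x hx =>
        rcases hx with hx | hx
        · intro ψ
          rw [hx, T_period V hper h ψ (T ψ) (T (ψ + 1)) (hT ψ) (hT (ψ + 1))]
        · intro ψ
          rw [hx]
          exact T_conj V h ψ (T ψ) (T (ψ + h)) (hT ψ) (hT (ψ + h))
    | zero => intro ψ; rw [add_zero]
    | add x y hx hy ihx ihy =>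
        intro ψ
        have : ψ + (x + y) = (ψ + x) + y := by ring
        rw [this, ihy (ψ + x), ihx ψ]
    | neg x hx ihx =>
        intro ψ
        have e1 : ψ + -x = ψ - x := by ring
        have := ihx (ψ - x)
        rw [sub_add_cancel] at this
        rw [e1, ← this]
  -- main spectral equality
  have hspec : ∀ θ θ' : ℝ, spectrum ℂ (T θ) = spectrum ℂ (T θ') := by
    intro θ θ'
    have happrox : ∀ ε > 0, ∃ c : E2 →L[ℂ] E2, IsSelfAdjoint c ∧
        spectrum ℂ c = spectrum ℂ (T θ) ∧ ‖T θ' - c‖ ≤ ε := by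
      intro ε hε
      obtain ⟨δ, hδ0, hδ⟩ := V_unif V hV hper ε hε
      have hdense := dense_sub h hirr
      have hmemcl : θ' - θ ∈ closure ((AddSubgroup.closure ({1, h} : Set ℝ) : AddSubgroup ℝ)
          : Set ℝ) := hdense _
      rw [Metric.mem_closure_iff] at hmemcl
      obtain ⟨s, hsmem, hsdist⟩ := hmemcl δ hδ0
      refine ⟨T (θ + s), T_selfadjoint V h (θ + s) _ (hT _), hsub s hsmem θ, ?_⟩
      refine T_diff_norm V h θ' (θ + s) (T θ') (T (θ + s)) (hT _) (hT _) ε hε.le fun x => ?_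
      apply hδ
      have e1 : (x + θ') - (x + (θ + s)) = (θ' - θ) - s := by ring
      rw [e1]
      rw [Real.dist_eq] at hsdist
      exact hsdist
    ext z
    constructor
    · intro hzθ
      by_contra hzθ'
      set D := Metric.infDist z (spectrum ℂ (T θ')) with hD
      have hDpos : 0 < D :=
        ((spectrum.isClosed (𝕜 := ℂ) (T θ')).notMem_iff_infDist_pos
          (spectrum.nonempty (T θ'))).1 hzθ'
      obtain ⟨c, hcsa, hcspec, hcnorm⟩ := happrox (D/2) (by positivity)
      refine spectrum_stable (T θ') c
        (T_selfadjoint V h θ' _ (hT θ')) (z := z) (hcspec ▸ hzθ) ?_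
      have : ‖c - T θ'‖ = ‖T θ' - c‖ := by rw [← norm_neg]; congr 1; abel
      rw [this]
      calc ‖T θ' - c‖ ≤ D/2 := hcnorm
        _ < D := by linarith
    · intro hzθ'
      by_contra hzθ
      set D := Metric.infDist z (spectrum ℂ (T θ)) with hD
      have hDpos : 0 < D :=
        ((spectrum.isClosed (𝕜 := ℂ) (T θ)).notMem_iff_infDist_pos
          (spectrum.nonempty (T θ))).1 hzθ
      obtain ⟨c, hcsa, hcspec, hcnorm⟩ := happrox (D/2) (by positivity)
      refine spectrum_stable c (T θ') hcsa (z := z) hzθ' ?_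
      rw [hcspec, ← hD]
      calc ‖T θ' - c‖ ≤ D/2 := hcnorm
        _ < D := by linarith
  refine ⟨hspec, fun θ => ?_⟩
  apply Set.Subset.antisymm
  · exact Set.iUnion_subset fun θ' => (hspec θ' θ).le
  · exact Set.subset_iUnion (fun θ' => spectrum ℂ (T θ')) θ


end
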